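/- For every n ≥ 1, the binary simplified de Bruijn graph S(n,2) is 3-colorable, a proper 3-coloring being given as follows: color a binary word of length n Red if it ends with an even positive number of repeated equal letters (i.e., its maximal constant suffix has even length), Blue if its maximal constant suffix consists of an odd number of 0's, and Green if its maximal constant suffix consists of an odd number of 1's. -/
import Mathlib


/-- Letters `x` and `y` alternate in the word `w`: after deleting all letters other than
`x` and `y`, no two consecutive letters of the remaining word are equal. -/
def Alternate {V : Type*} [DecidableEq V] (w : List V) (x y : V) : Prop :=
  (w.filter (fun z => decide (z = x ∨ z = y))).Chain' (· ≠ ·)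

/-- A simple graph `G` is word-representable if there is a word over its vertex set,
containing every vertex, such that two distinct letters alternate in the word
if and only if they are adjacent in `G`. -/
def WordRepresentable {V : Type*} [DecidableEq V] (G : SimpleGraph V) : Prop :=
  ∃ w : List V, (∀ v : V, v ∈ w) ∧ ∀ x y : V, x ≠ y → (G.Adj x y ↔ Alternate w x y)

/-- `rel` is an orientation of the simple graph `G`: every arc lies on an edge of `G`,
and every edge of `G` is oriented in exactly one of the two directions. -/
def IsOrientation {V : Type*} (G : SimpleGraph V) (rel : V → V → Prop) : Prop :=
  (∀ x y, rel x y → G.Adj x y) ∧ (∀ x y, G.Adj x y → (rel x y ↔ ¬ rel y x))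

/-- An orientation `rel` of `G` is semi-transitive: it is acyclic, and for every directed
path `p 0 → p 1 → ⋯ → p k`, either the endpoints are non-adjacent in `G`, or there is an
arc `p i → p j` for all `i < j`. -/
def IsSemiTransitive {V : Type*} (G : SimpleGraph V) (rel : V → V → Prop) : Prop :=
  (∀ v, ¬ Relation.TransGen rel v v) ∧
  ∀ (k : ℕ) (p : Fin (k + 1) → V),
    (∀ i : Fin k, rel (p i.castSucc) (p i.succ)) →
    (¬ G.Adj (p 0) (p (Fin.last k)) ∨ ∀ i j : Fin (k + 1), i < j → rel (p i) (p j))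

/-- `v` is obtained from `u` by deleting the first letter and appending a letter at the end:
`v i = u (i+1)` for all `i < n - 1`. -/
def debruijnShift (n k : ℕ) (u v : Fin n → Fin k) : Prop :=
  ∀ (i : ℕ) (h : i + 1 < n), v ⟨i, Nat.lt_of_succ_lt h⟩ = u ⟨i + 1, h⟩

/-- The simplified de Bruijn graph `S(n,k)`: vertices are words of length `n` over a
`k`-letter alphabet; distinct words are adjacent if one is obtained from the other by
deleting the first letter and appending a letter at the end. -/
def simplifiedDeBruijn (n k : ℕ) : SimpleGraph (Fin n → Fin k) :=
  SimpleGraph.fromRel (debruijnShift n k)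

/-- The length of the maximal constant suffix of a binary word of length `n`:
the greatest `m ≤ n` such that all letters in the last `m` positions are equal. -/
def maxConstSuffix {n : ℕ} (u : Fin n → Fin 2) : ℕ :=
  Nat.findGreatest
    (fun m => ∀ i j : Fin n, n - m ≤ (i : ℕ) → n - m ≤ (j : ℕ) → u i = u j) n

/-- The coloring of binary words of length `n ≥ 1` by three colors `0` (Red), `1` (Blue),
`2` (Green): Red if the maximal constant suffix has even (positive) length, Blue if it
consists of an odd number of 0's, Green if it consists of an odd number of 1's. -/
def deBruijnColor {n : ℕ} (hn : 1 ≤ n) (u : Fin n → Fin 2) : Fin 3 :=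
  if Even (maxConstSuffix u) then 0
  else if u ⟨n - 1, by omega⟩ = 0 then 1 else 2

private lemma mcs_le {n : ℕ} (u : Fin n → Fin 2) : maxConstSuffix u ≤ n :=
  Nat.findGreatest_le n

private lemma mcs_pos {n : ℕ} (hn : 1 ≤ n) (u : Fin n → Fin 2) : 1 ≤ maxConstSuffix u :=
  Nat.le_findGreatest hn (fun i j hi hj => by
    have hi' := i.isLt; have hj' := j.isLt
    have : i = j := Fin.ext (by omega)
    rw [this])

private lemma mcs_spec {n : ℕ} (hn : 1 ≤ n) (u : Fin n → Fin 2) :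
    ∀ i j : Fin n, n - maxConstSuffix u ≤ (i : ℕ) → n - maxConstSuffix u ≤ (j : ℕ) →
      u i = u j := by
  have h := (Nat.findGreatest_eq_iff
    (P := fun m => ∀ i j : Fin n, n - m ≤ (i : ℕ) → n - m ≤ (j : ℕ) → u i = u j)
    (k := n) (m := maxConstSuffix u)).mp rfl
  exact h.2.1 (by have := mcs_pos hn u; omega)

private lemma mcs_max {n : ℕ} (u : Fin n → Fin 2) {m : ℕ} (h1 : maxConstSuffix u < m)
    (h2 : m ≤ n) : ¬ ∀ i j : Fin n, n - m ≤ (i : ℕ) → n - m ≤ (j : ℕ) → u i = u j := by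
  have h := (Nat.findGreatest_eq_iff
    (P := fun m => ∀ i j : Fin n, n - m ≤ (i : ℕ) → n - m ≤ (j : ℕ) → u i = u j)
    (k := n) (m := maxConstSuffix u)).mp rfl
  exact h.2.2 h1 h2

private lemma mcs_eq {n : ℕ} (u : Fin n → Fin 2) (t : ℕ) (ht0 : 1 ≤ t) (ht : t ≤ n)
    (hP : ∀ i j : Fin n, n - t ≤ (i : ℕ) → n - t ≤ (j : ℕ) → u i = u j)
    (hmax : t = n ∨ ∃ i j : Fin n, n - (t + 1) ≤ (i : ℕ) ∧ n - (t + 1) ≤ (j : ℕ) ∧ u i ≠ u j) :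
    maxConstSuffix u = t := by
  rw [maxConstSuffix, Nat.findGreatest_eq_iff]
  refine ⟨ht, fun _ => hP, fun {k} hk hk' hPk => ?_⟩
  rcases hmax with h | ⟨i, j, hi, hj, hij⟩
  · omega
  · exact hij (hPk i j (by omega) (by omega))

private lemma mcs_boundary {n : ℕ} (hn : 1 ≤ n) (u : Fin n → Fin 2)
    (hlt : maxConstSuffix u < n) :
    u ⟨n - maxConstSuffix u - 1, by omega⟩ ≠ u ⟨n - 1, by omega⟩ := by
  intro heq
  set s := maxConstSuffix u with hs
  have hpos := mcs_pos hn u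
  refine mcs_max u (m := s + 1) (by omega) (by omega) ?_
  intro i j hi hj
  have key : ∀ i : Fin n, n - (s + 1) ≤ (i : ℕ) → u i = u ⟨n - 1, by omega⟩ := by
    intro i hi
    rcases eq_or_lt_of_le hi with h | h
    · have : i = ⟨n - s - 1, by omega⟩ := Fin.ext (show (i:ℕ) = n - s - 1 by omega)
      rw [this]; exact heq
    · exact mcs_spec hn u i ⟨n - 1, by omega⟩ (by omega) (show n - s ≤ n - 1 by omega)
  rw [key i hi, key j hj]

private lemma color_eval {n : ℕ} (hn : 1 ≤ n) (u : Fin n → Fin 2) (hp : n - 1 < n) :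
    deBruijnColor hn u =
      if Even (maxConstSuffix u) then 0 else if u ⟨n - 1, hp⟩ = 0 then 1 else 2 := rfl

private lemma shift_color_ne {n : ℕ} (hn : 1 ≤ n) {u v : Fin n → Fin 2}
    (hne : u ≠ v) (hsh : debruijnShift n 2 u v) :
    deBruijnColor hn u ≠ deBruijnColor hn v := by
  have hp : n - 1 < n := by omega
  have hpos := mcs_pos hn u
  have hsle := mcs_le u
  rw [color_eval hn u hp, color_eval hn v hp]
  by_cases hab : v ⟨n - 1, hp⟩ = u ⟨n - 1, hp⟩
  case pos =>
    have hslt : maxConstSuffix u < n := by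
      rcases lt_or_eq_of_le hsle with h | h
      · exact h
      · exfalso; apply hne; funext i
        have hall : ∀ i j : Fin n, u i = u j := fun i j =>
          mcs_spec hn u i j (by omega) (by omega)
        by_cases hi : (i : ℕ) + 1 < n
        · rw [show v i = u ⟨(i : ℕ) + 1, hi⟩ from hsh (i : ℕ) hi]
          exact hall _ _
        · have h2 : i = ⟨n - 1, hp⟩ := Fin.ext (show (i:ℕ) = n - 1 by have := i.isLt; omega)
          rw [h2]; exact hab.symm
    have hva : ∀ i : Fin n, n - (maxConstSuffix u + 1) ≤ (i : ℕ) → v i = u ⟨n - 1, hp⟩ := by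
      intro i hi
      by_cases h : (i : ℕ) + 1 < n
      · rw [show v i = u ⟨(i : ℕ) + 1, h⟩ from hsh (i : ℕ) h]
        exact mcs_spec hn u _ _ (show n - maxConstSuffix u ≤ (i:ℕ)+1 by omega)
          (show n - maxConstSuffix u ≤ n - 1 by omega)
      · have h2 : i = ⟨n - 1, hp⟩ := Fin.ext (show (i:ℕ) = n - 1 by have := i.isLt; omega)
        rw [h2]; exact hab
    have hmcsv : maxConstSuffix v = maxConstSuffix u + 1 := by
      apply mcs_eq v _ (by omega) (by omega)
      · intro i j hi hj; rw [hva i hi, hva j hj]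
      · by_cases h : maxConstSuffix u + 1 = n
        · exact Or.inl h
        · have h2 : n - maxConstSuffix u - 2 + 1 < n := by omega
          refine Or.inr ⟨⟨n - maxConstSuffix u - 2, Nat.lt_of_succ_lt h2⟩, ⟨n - 1, hp⟩,
            show n - (maxConstSuffix u + 1 + 1) ≤ n - maxConstSuffix u - 2 by omega,
            show n - (maxConstSuffix u + 1 + 1) ≤ n - 1 by omega, ?_⟩
          intro hc
          have e1 : (⟨n - maxConstSuffix u - 1, by omega⟩ : Fin n)
              = ⟨n - maxConstSuffix u - 2 + 1, h2⟩ :=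
            Fin.ext (show n - maxConstSuffix u - 1 = n - maxConstSuffix u - 2 + 1 by omega)
          exact mcs_boundary hn u hslt
            ((congrArg u e1).trans ((hsh _ h2).symm.trans (hc.trans hab)))
    rw [hmcsv]
    rcases Nat.even_or_odd (maxConstSuffix u) with he | ho
    · rw [if_pos he, if_neg (by rw [Nat.even_add_one]; exact fun hc => hc he)]
      split <;> decide
    · have he1 : Even (maxConstSuffix u + 1) := by
        rw [Nat.even_add_one]; exact Nat.not_even_iff_odd.mpr ho
      rw [if_neg (Nat.not_even_iff_odd.mpr ho), if_pos he1]
      split <;> decide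
  case neg =>
    have hmcsv : maxConstSuffix v = 1 := by
      apply mcs_eq v 1 le_rfl hn
      · intro i j hi hj
        have : i = j := Fin.ext (by have := i.isLt; have := j.isLt; omega)
        rw [this]
      · by_cases h : 1 = n
        · exact Or.inl h
        · have h2 : n - 2 + 1 < n := by omega
          refine Or.inr ⟨⟨n - 2, Nat.lt_of_succ_lt h2⟩, ⟨n - 1, hp⟩,
            show n - (1 + 1) ≤ n - 2 by omega, show n - (1 + 1) ≤ n - 1 by omega, ?_⟩
          intro hc
          have e1 : (⟨n - 2 + 1, h2⟩ : Fin n) = ⟨n - 1, hp⟩ :=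
            Fin.ext (show n - 2 + 1 = n - 1 by omega)
          exact hab (hc.symm.trans ((hsh (n - 2) h2).trans (congrArg u e1)))
    rw [hmcsv, if_neg (by decide : ¬ Even 1)]
    rcases Nat.even_or_odd (maxConstSuffix u) with he | ho
    · rw [if_pos he]; split <;> decide
    · rw [if_neg (Nat.not_even_iff_odd.mpr ho)]
      have h2 : ∀ x : Fin 2, x = 0 ∨ x = 1 := by decide
      rcases h2 (u ⟨n - 1, hp⟩) with h3 | h3 <;> rcases h2 (v ⟨n - 1, hp⟩) with h4 | h4 <;>
        first
          | exact absurd (h4.trans h3.symm) hab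
          | (rw [h3, h4]; decide)

/-- For every `n ≥ 1`, the explicit coloring `deBruijnColor` is a proper 3-coloring of the
binary simplified de Bruijn graph `S(n,2)`; in particular `S(n,2)` is 3-colorable. -/
theorem simplifiedDeBruijn_two_three_colorable (n : ℕ) (hn : 1 ≤ n) :
    (∀ u v : Fin n → Fin 2,
      (simplifiedDeBruijn n 2).Adj u v → deBruijnColor hn u ≠ deBruijnColor hn v) ∧
    (simplifiedDeBruijn n 2).Colorable 3 := by
  have key : ∀ u v : Fin n → Fin 2,
      (simplifiedDeBruijn n 2).Adj u v → deBruijnColor hn u ≠ deBruijnColor hn v := by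
    intro u v hadj
    rw [simplifiedDeBruijn, SimpleGraph.fromRel_adj] at hadj
    obtain ⟨hne, h | h⟩ := hadj
    · exact shift_color_ne hn hne h
    · exact fun hc => shift_color_ne hn (Ne.symm hne) h hc.symm
  exact ⟨key, ⟨SimpleGraph.Coloring.mk (deBruijnColor hn) (fun {u v} h => key u v h)⟩⟩
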